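/- Let G(V,E) be a chordal graph with maximal cliques C₁,…,C_m. A symmetric matrix Z' partially specified on the diagonal and on E has a positive semidefinite completion if and only if every principal submatrix of Z' indexed by a maximal clique C_i is positive semidefinite. -/

import Mathlib

/-- A simple graph is chordal if every (injective) cycle of length at least 4 has a chord. -/
def IsChordal {V : Type*} (G : SimpleGraph V) : Prop :=
  ∀ n : ℕ, 4 ≤ n → ∀ f : ZMod n → V, Function.Injective f →
    (∀ i, G.Adj (f i) (f (i + 1))) →
    ∃ i j : ZMod n, i ≠ j ∧ j ≠ i + 1 ∧ i ≠ j + 1 ∧ G.Adj (f i) (f j)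

/-- A maximal clique: a clique not properly contained in any other clique. -/
def IsMaxClq {V : Type*} (G : SimpleGraph V) (s : Set V) : Prop :=
  G.IsClique s ∧ ∀ t : Set V, G.IsClique t → s ⊆ t → s = t

/-!
Dirac's lemma: a chordal graph is complete or has two nonadjacent simplicial vertices. For
nonadjacent `a`, `b`, let `A` be the component of `a` in `G - N[b]`. Its outer boundary lies in
`N(b)` and is a clique, since a shortest path through `A` between two nonadjacent boundary vertices
would close a chordless cycle through `b`. By induction `G[A ∪ ∂A]` has a simplicial vertex in `A`,
which is simplicial in `G`; doing this once more from that vertex gives the second one.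

Completion: remove a simplicial vertex `v`, complete the rest to a PSD `W` by induction, and fill
row `v`. On the clique `N[v]` the specified block `[[d, bᵀ], [b, A]]` is PSD, which forces
`b = A x` with `xᵀ b ≤ d`. Extending `x` by zero to `x̂` and taking `W x̂` as the new row, the
quadratic form of `[[d, (W x̂)ᵀ], [W x̂, W]]` at `(t, y)` is
`(d - x̂ᵀ W x̂) t² + (y + t x̂)ᵀ W (y + t x̂) ≥ 0`.
-/

universe u

namespace Matrix

variable {m : Type*}

def bordered (d : ℝ) (c : m → ℝ) (W : Matrix m m ℝ) : Matrix (Option m) (Option m) ℝ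
  | none, none => d
  | none, some j => c j
  | some i, none => c i
  | some i, some j => W i j

variable [Fintype m]

theorem IsHermitian.exists_mulVec_eq {A : Matrix m m ℝ} (hA : A.IsHermitian)
    {b : m → ℝ} (hb : ∀ z, A *ᵥ z = 0 → b ⬝ᵥ z = 0) : ∃ x, A *ᵥ x = b := by
  classical
  set T := toEuclideanLin A
  have hT : T.IsSymmetric := isSymmetric_toEuclideanLin_iff.mpr hA
  have hrange : LinearMap.range T = (LinearMap.ker T)ᗮ := by
    rw [← hT.orthogonal_range, Submodule.orthogonal_orthogonal]
  have hmem : WithLp.toLp 2 b ∈ LinearMap.range T := by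
    rw [hrange, Submodule.mem_orthogonal]
    intro z hz
    rw [EuclideanSpace.inner_eq_star_dotProduct, star_trivial]
    exact hb _ (congrArg WithLp.ofLp hz)
  obtain ⟨x, hx⟩ := hmem
  exact ⟨WithLp.ofLp x, congrArg WithLp.ofLp hx⟩

variable {d : ℝ} {c : m → ℝ} {W : Matrix m m ℝ}

theorem dotProduct_bordered_mulVec (x : Option m → ℝ) :
    x ⬝ᵥ (bordered d c W *ᵥ x) =
      d * x none ^ 2 + 2 * x none * (c ⬝ᵥ (x ∘ some)) + (x ∘ some) ⬝ᵥ (W *ᵥ (x ∘ some)) := by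
  have hc : ∑ i, x (some i) * (c i * x none) = x none * (c ⬝ᵥ (x ∘ some)) := by
    simp only [dotProduct, Finset.mul_sum, Function.comp]
    exact Finset.sum_congr rfl fun _ _ => by ring
  simp only [dotProduct, mulVec, Fintype.sum_option, bordered, Function.comp] at hc ⊢
  simp only [mul_add, Finset.sum_add_distrib, hc]
  ring

theorem PosSemidef.exists_mulVec_eq_of_bordered
    (h : (bordered d c W).PosSemidef) : ∃ x, W *ᵥ x = c ∧ x ⬝ᵥ c ≤ d := by
  have hform (t : ℝ) (y : m → ℝ) : 0 ≤ d * t ^ 2 + 2 * t * (c ⬝ᵥ y) + y ⬝ᵥ (W *ᵥ y) := by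
    have := h.dotProduct_mulVec_nonneg fun o => o.elim t y
    rwa [star_trivial, dotProduct_bordered_mulVec] at this
  have hW : W.PosSemidef := h.submatrix some
  have hker (z : m → ℝ) (hz : W *ᵥ z = 0) : c ⬝ᵥ z = 0 := by
    have hdiscr := discrim_le_zero (a := d) (b := 2 * (c ⬝ᵥ z)) (c := 0) fun t => by
      simpa [hz, sq, mul_assoc, mul_comm, mul_left_comm] using hform t z
    rw [discrim] at hdiscr
    nlinarith
  obtain ⟨x, hx⟩ := hW.isHermitian.exists_mulVec_eq hker
  refine ⟨x, hx, ?_⟩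
  have := hform 1 (-x)
  simp only [mulVec_neg, hx, dotProduct_neg, neg_dotProduct, neg_neg, dotProduct_comm c x] at this
  linarith

theorem PosSemidef.bordered_mulVec (hW : W.PosSemidef) {x : m → ℝ} (hd : x ⬝ᵥ (W *ᵥ x) ≤ d) :
    (bordered d (W *ᵥ x) W).PosSemidef := by
  have hWsymm : Wᵀ = W := hW.isHermitian
  refine .of_dotProduct_mulVec_nonneg ?_ fun v => ?_
  · ext (_ | i) (_ | j) <;> simp [bordered, conjTranspose_apply]
    exact congrFun₂ hWsymm i j
  · set t := v none
    set y := v ∘ some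
    have hsymm (u w : m → ℝ) : u ⬝ᵥ (W *ᵥ w) = w ⬝ᵥ (W *ᵥ u) := by
      rw [dotProduct_mulVec, ← mulVec_transpose, hWsymm, dotProduct_comm]
    have key : d * t ^ 2 + 2 * t * ((W *ᵥ x) ⬝ᵥ y) + y ⬝ᵥ (W *ᵥ y) =
        (d - x ⬝ᵥ (W *ᵥ x)) * t ^ 2 + (y + t • x) ⬝ᵥ (W *ᵥ (y + t • x)) := by
      simp only [mulVec_add, mulVec_smul, add_dotProduct, dotProduct_add, smul_dotProduct,
        dotProduct_smul, smul_eq_mul, dotProduct_comm (W *ᵥ x), hsymm y x]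
      ring
    rw [star_trivial, dotProduct_bordered_mulVec, key]
    have := hW.dotProduct_mulVec_nonneg (y + t • x)
    rw [star_trivial] at this
    nlinarith [sq_nonneg t]

theorem dotProduct_extend_zero {p : m → Prop} [DecidablePred p] (u : m → ℝ)
    (x : Subtype p → ℝ) :
    u ⬝ᵥ (fun i => if hi : p i then x ⟨i, hi⟩ else 0) = (fun j : Subtype p => u j) ⬝ᵥ x := by
  rw [dotProduct, ← Fintype.sum_subtype_add_sum_subtype p]
  have hvanish : ∑ j : {i // ¬p i}, u j * (if hi : p j then x ⟨j, hi⟩ else 0) = 0 :=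
    Finset.sum_eq_zero fun j _ => by simp [j.2]
  rw [hvanish, add_zero]
  exact Finset.sum_congr rfl fun j _ => by simp [j.2]

theorem PosSemidef.exists_bordered_of_bordered_submatrix (hW : W.PosSemidef)
    {p : m → Prop} [DecidablePred p] {b : m → ℝ}
    (h : (bordered d (fun j : Subtype p => b j) (W.submatrix Subtype.val Subtype.val)).PosSemidef) :
    ∃ c : m → ℝ, (∀ i, p i → c i = b i) ∧ (bordered d c W).PosSemidef := by
  obtain ⟨x, hx, hxd⟩ := h.exists_mulVec_eq_of_bordered
  set xh : m → ℝ := fun i => if hi : p i then x ⟨i, hi⟩ else 0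
  have hagree (j : Subtype p) : (W *ᵥ xh) j = b j := by
    rw [mulVec, dotProduct_extend_zero]
    exact congrFun hx j
  refine ⟨W *ᵥ xh, fun i hi => hagree ⟨i, hi⟩, hW.bordered_mulVec ?_⟩
  calc xh ⬝ᵥ (W *ᵥ xh) = (fun j : Subtype p => (W *ᵥ xh) j) ⬝ᵥ x := by
        rw [dotProduct_comm, dotProduct_extend_zero]
    _ = x ⬝ᵥ (fun j : Subtype p => b j) := by rw [funext hagree, dotProduct_comm]
    _ ≤ d := hxd

end Matrix

theorem ZMod.val_add_one {n : ℕ} [NeZero n] (i : ZMod n) :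
    (i + 1).val = if i.val = n - 1 then 0 else i.val + 1 := by
  have hi := i.val_lt
  rw [ZMod.val_add, ZMod.val_one_eq_one_mod]
  split_ifs with h
  · rcases Nat.lt_or_ge n 2 with hn | hn
    · obtain rfl : n = 1 := by omega
      exact Nat.mod_one _
    · rw [Nat.mod_eq_of_lt (by omega : 1 < n), h, Nat.sub_add_cancel (by omega), Nat.mod_self]
  · rw [Nat.mod_eq_of_lt (by omega : 1 < n), Nat.mod_eq_of_lt (by omega)]

namespace SimpleGraph

variable {V : Type u} {G : SimpleGraph V}

theorem Walk.not_adj_getVert_of_length_eq_dist {u v : V} {p : G.Walk u v}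
    (hp : p.length = G.dist u v) {i j : ℕ} (hij : i + 2 ≤ j) (hj : j ≤ p.length) :
    ¬G.Adj (p.getVert i) (p.getVert j) := fun h => by
  have := G.dist_le ((p.take i).append ((p.drop j).cons h))
  simp only [Walk.length_append, Walk.length_cons, Walk.take_length, Walk.drop_length] at this
  omega

def outerBoundary (G : SimpleGraph V) (A : Set V) : Set V :=
  {w | w ∉ A ∧ ∃ a ∈ A, G.Adj w a}

def IsSimplicial (G : SimpleGraph V) (v : V) : Prop :=
  G.IsClique (G.neighborSet v)

def CliqueOrSimplicialPair (G : SimpleGraph V) : Prop :=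
  G.IsClique Set.univ ∨ ∃ u w, u ≠ w ∧ ¬G.Adj u w ∧ G.IsSimplicial u ∧ G.IsSimplicial w

theorem exists_induce_component [Finite V] {F : Set V} {a : V} (ha : a ∈ F) :
    ∃ A ⊆ F, a ∈ A ∧ (G.induce A).Preconnected ∧ ∀ z ∈ A, ∀ r ∈ F, G.Adj z r → r ∈ A := by
  obtain ⟨A, haA, hmax⟩ := Finite.exists_le_maximal (a := ({a} : Set V))
    (p := fun A => A ⊆ F ∧ (G.induce A).Preconnected)
    ⟨Set.singleton_subset_iff.mpr ha, .of_subsingleton⟩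
  refine ⟨A, hmax.prop.1, haA rfl, hmax.prop.2, fun z hz r hr hzr => ?_⟩
  have hext : A ∪ {r} ⊆ F ∧ (G.induce (A ∪ {r})).Preconnected :=
    ⟨Set.union_subset hmax.prop.1 (Set.singleton_subset_iff.mpr hr),
      (connected_induce_union hmax.prop.2 .of_subsingleton hz (Set.mem_singleton r)
        hzr).preconnected⟩
  exact hmax.le_of_ge hext Set.subset_union_left (Or.inr rfl)

theorem IsSimplicial.of_induce {C : Set V} {u : C} (hN : G.neighborSet u ⊆ C)
    (h : (G.induce C).IsSimplicial u) : G.IsSimplicial u := fun p hp q hq hpq =>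
  @h ⟨p, hN hp⟩ hp ⟨q, hN hq⟩ hq fun h => hpq (congrArg Subtype.val h)

theorem exists_isSimplicial_mem_of_isClique_outerBoundary {A : Set V} {a : V} (ha : a ∈ A)
    (hbd : G.IsClique (G.outerBoundary A))
    (hD : (G.induce (A ∪ G.outerBoundary A)).CliqueOrSimplicialPair) :
    ∃ u ∈ A, G.IsSimplicial u := by
  have hN (u : V) (hu : u ∈ A) : G.neighborSet u ⊆ A ∪ G.outerBoundary A := fun w hw =>
    or_iff_not_imp_left.mpr fun hwA => ⟨hwA, u, hu, hw.symm⟩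
  rcases hD with hcl | ⟨u, w, huw, hnadj, hu, hw⟩
  · exact ⟨a, ha, IsSimplicial.of_induce (u := ⟨a, .inl ha⟩) (hN a ha)
      (hcl.subset (Set.subset_univ _))⟩
  · by_cases huA : (u : V) ∈ A
    · exact ⟨u, huA, hu.of_induce (hN u huA)⟩
    by_cases hwA : (w : V) ∈ A
    · exact ⟨w, hwA, hw.of_induce (hN w hwA)⟩
    exact absurd (hbd (u.2.resolve_left huA) (w.2.resolve_left hwA)
      fun h => huw (Subtype.ext h)) hnadj

theorem exists_isMaxClq_superset [Finite V] {s : Set V} (hs : G.IsClique s) :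
    ∃ t : Finset V, s ⊆ t ∧ IsMaxClq G t := by
  obtain ⟨t, hst, hmax⟩ := Finite.exists_le_maximal (p := G.IsClique) hs
  refine ⟨t.toFinite.toFinset, by simpa using hst, ?_⟩
  rw [Set.Finite.coe_toFinset]
  exact ⟨hmax.prop, fun t' ht' htt' => htt'.antisymm (hmax.le_of_ge ht' htt')⟩

open Matrix

def IsPosSemidefCompletion (G : SimpleGraph V) (M Z : Matrix V V ℝ) : Prop :=
  Z.PosSemidef ∧ (∀ i, Z i i = M i i) ∧ ∀ i j, G.Adj i j → Z i j = M i j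

/-- Taken along arbitrary maps into a clique rather than `Finset`s, so that blocks indexed by other
types (such as `Option N(v)` below) need no conversion. -/
def PosSemidefOnCliques (G : SimpleGraph V) (M : Matrix V V ℝ) : Prop :=
  ∀ (ι : Type u) (f : ι → V), G.IsClique (Set.range f) → (M.submatrix f f).PosSemidef

theorem IsPosSemidefCompletion.submatrix_eq {M Z : Matrix V V ℝ}
    (h : G.IsPosSemidefCompletion M Z) {ι : Type*} {f : ι → V} (hf : G.IsClique (Set.range f)) :
    Z.submatrix f f = M.submatrix f f := by
  ext i j
  by_cases hij : f i = f j
  · simp only [submatrix_apply, hij, h.2.1]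
  · exact h.2.2 _ _ (hf ⟨i, rfl⟩ ⟨j, rfl⟩ hij)

theorem PosSemidefOnCliques.comap {W : Type u} {M : Matrix V V ℝ} (h : G.PosSemidefOnCliques M)
    (e : W ↪ V) : (G.comap e).PosSemidefOnCliques (M.submatrix e e) := fun ι f hf =>
  h ι (e ∘ f) fun _ ⟨i, hi⟩ _ ⟨j, hj⟩ hne => by
    subst hi hj
    exact hf ⟨i, rfl⟩ ⟨j, rfl⟩ fun h => hne (congrArg e h)

theorem isPosSemidefCompletion_bordered_submatrix [DecidableEq V] {M : Matrix V V ℝ}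
    (hM : M.IsSymm) {v : V} {W : Matrix {w // w ≠ v} {w // w ≠ v} ℝ}
    (hW : (G.comap (Function.Embedding.subtype _)).IsPosSemidefCompletion
      (M.submatrix Subtype.val Subtype.val) W)
    {c : {w // w ≠ v} → ℝ} (hc : ∀ w : {w // w ≠ v}, G.Adj v w → c w = M v w)
    (hZ : (bordered (M v v) c W).PosSemidef) :
    G.IsPosSemidefCompletion M
      ((bordered (M v v) c W).submatrix (Equiv.optionSubtypeNe v).symm
        (Equiv.optionSubtypeNe v).symm) := by
  refine ⟨hZ.submatrix _, fun i => ?_, fun i j hij => ?_⟩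
  · by_cases hi : i = v
    · simp [hi, bordered]
    · simpa [Equiv.optionSubtypeNe_symm_of_ne hi, bordered] using hW.2.1 ⟨i, hi⟩
  · by_cases hi : i = v <;> by_cases hj : j = v
    · exact absurd (hi ▸ hj ▸ hij) (G.irrefl)
    · simpa [hi, Equiv.optionSubtypeNe_symm_of_ne hj, bordered] using
        hc ⟨j, hj⟩ (hi ▸ hij)
    · simpa [hj, Equiv.optionSubtypeNe_symm_of_ne hi, bordered, hM.apply] using
        hc ⟨i, hi⟩ (hj ▸ hij.symm)
    · simpa [Equiv.optionSubtypeNe_symm_of_ne hi, Equiv.optionSubtypeNe_symm_of_ne hj,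
        bordered] using hW.2.2 ⟨i, hi⟩ ⟨j, hj⟩ hij

theorem exists_isPosSemidefCompletion_of_isSimplicial [Finite V] {M : Matrix V V ℝ}
    (hM : M.IsSymm) (hcl : G.PosSemidefOnCliques M) {v : V} (hv : G.IsSimplicial v)
    {W : Matrix {w // w ≠ v} {w // w ≠ v} ℝ}
    (hW : (G.comap (Function.Embedding.subtype _)).IsPosSemidefCompletion
      (M.submatrix Subtype.val Subtype.val) W) :
    ∃ Z, G.IsPosSemidefCompletion M Z := by
  classical
  have := Fintype.ofFinite V
  let N : {w // w ≠ v} → Prop := fun w => G.Adj v w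
  -- enumerates the clique `N[v]`, with `none ↦ v`
  let f : Option (Subtype N) → V := fun o => o.elim v fun w => w.1.1
  have hf : G.IsClique (Set.range f) := by
    rintro _ ⟨(_ | p), rfl⟩ _ ⟨(_ | q), rfl⟩ hne
    · exact absurd rfl hne
    · exact q.2
    · exact p.2.symm
    · exact hv p.2 q.2 hne
  have hblock : bordered (M v v) (fun w : Subtype N => M v w)
      (W.submatrix Subtype.val Subtype.val) = M.submatrix f f := by
    ext (_ | p) (_ | q)
    · rfl
    · rfl
    · exact (congrFun₂ hM v p).symm
    · refine congrFun₂ (hW.submatrix_eq (f := Subtype.val) ?_) p q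
      rintro _ ⟨p, rfl⟩ _ ⟨q, rfl⟩ hne
      exact hv p.2 q.2 fun h => hne (Subtype.ext h)
  obtain ⟨c, hc, hZ⟩ := hW.1.exists_bordered_of_bordered_submatrix (p := N)
    (b := fun w => M v w) (hblock ▸ hcl _ f hf :)
  exact ⟨_, isPosSemidefCompletion_bordered_submatrix hM hW hc hZ⟩

end SimpleGraph

section Chordal

open SimpleGraph

variable {V : Type u} {G : SimpleGraph V}

theorem IsChordal.comap {W : Type*} (hG : IsChordal G) (f : W ↪ V) : IsChordal (G.comap f) :=
  fun n hn g hg hadj => hG n hn (f ∘ g) (f.injective.comp hg) hadj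

theorem IsChordal.exists_chord (hG : IsChordal G) {n : ℕ} (hn : 4 ≤ n) {c : ℕ → V}
    (hinj : Set.InjOn c (Set.Iio n)) (hadj : ∀ i, i + 1 < n → G.Adj (c i) (c (i + 1)))
    (hclose : G.Adj (c (n - 1)) (c 0)) :
    ∃ i j, i + 2 ≤ j ∧ j < n ∧ (i = 0 → j ≠ n - 1) ∧ G.Adj (c i) (c j) := by
  have : NeZero n := ⟨by omega⟩
  have hval := @ZMod.val_lt n _
  obtain ⟨i, j, hij, hji, hij', hcij⟩ := hG n hn (fun i => c i.val)
    (fun i j h => ZMod.val_injective n (hinj (hval i) (hval j) h)) fun i => by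
      rw [ZMod.val_add_one]
      split_ifs with h
      · rwa [h]
      · exact hadj _ (by have := hval i; omega)
  wlog hlt : i.val < j.val generalizing i j
  · exact this j i hij.symm hij' hji hcij.symm <|
      (not_lt.mp hlt).lt_of_ne fun h => hij (ZMod.val_injective n h.symm)
  refine ⟨i.val, j.val, ?_, hval j, fun hi0 hjn => hij' ?_, hcij⟩
  · by_contra h
    refine hji (ZMod.val_injective n ?_)
    rw [ZMod.val_add_one, if_neg (by have := hval j; omega)]
    omega
  · exact ZMod.val_injective n (by rw [ZMod.val_add_one, if_pos hjn, hi0])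

theorem IsChordal.exists_adj_interior (hG : IsChordal G) {k : ℕ} (hk : 2 ≤ k) {g : ℕ → V}
    (hinj : Set.InjOn g (Set.Iic k)) (hadj : ∀ i < k, G.Adj (g i) (g (i + 1)))
    (hchordless : ∀ i j, i + 2 ≤ j → j ≤ k → ¬G.Adj (g i) (g j)) {b : V}
    (hb : ∀ i ≤ k, g i ≠ b) (hb0 : G.Adj (g 0) b) (hbk : G.Adj (g k) b) :
    ∃ i, 0 < i ∧ i < k ∧ G.Adj (g i) b := by
  set c : ℕ → V := fun i => if i ≤ k then g i else b
  have hcg {i : ℕ} (hi : i ≤ k) : c i = g i := if_pos hi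
  have hcb : c (k + 1) = b := if_neg (by omega)
  obtain ⟨i, j, hij, hjn, hend, hcij⟩ := hG.exists_chord (n := k + 2) (by omega) (c := c)
    (fun i hi j hj h => by
      simp only [Set.mem_Iio] at hi hj
      rcases Nat.lt_or_ge k i with hik | hik <;> rcases Nat.lt_or_ge k j with hjk | hjk
      · omega
      · exact absurd h (by rw [show i = k + 1 by omega, hcb, hcg hjk]; exact (hb j hjk).symm)
      · exact absurd h (by rw [hcg hik, show j = k + 1 by omega, hcb]; exact hb i hik)
      · exact hinj hik hjk (by rwa [hcg hik, hcg hjk] at h))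
    (fun i hi => by
      rcases Nat.lt_or_ge i k with hik | hik
      · rw [hcg hik.le, hcg hik]; exact hadj i hik
      · rw [show i = k by omega, hcg le_rfl, hcb]; exact hbk)
    (by rw [show k + 2 - 1 = k + 1 by omega, hcb, hcg (Nat.zero_le _)]; exact hb0.symm)
  by_cases hjk : j ≤ k
  · exact absurd (by rwa [hcg (by omega), hcg hjk] at hcij) (hchordless i j hij hjk)
  · have hj : j = k + 1 := by omega
    refine ⟨i, Nat.pos_of_ne_zero fun hi => hend hi (by omega), by omega, ?_⟩
    rwa [hj, hcb, hcg (by omega)] at hcij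

theorem IsChordal.isClique_outerBoundary_inter_neighborSet (hG : IsChordal G) {A : Set V}
    (hA : (G.induce A).Preconnected) {b : V} (hbA : b ∉ A) (hNA : ∀ z ∈ A, ¬G.Adj b z) :
    G.IsClique (G.outerBoundary A ∩ G.neighborSet b) := by
  rintro x ⟨⟨hxA, ax, haxA, hxax⟩, hbx⟩ y ⟨⟨hyA, ay, hayA, hyay⟩, hby⟩ hxy
  by_contra hnxy
  set S : Set V := ({x} ∪ A) ∪ {y}
  have hS : (G.induce S).Connected :=
    connected_induce_union (connected_induce_union .of_subsingleton hA (Set.mem_singleton x) haxA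
      hxax).preconnected .of_subsingleton (.inr hayA) (Set.mem_singleton y) hyay.symm
  obtain ⟨p, hp⟩ := hS.exists_walk_length_eq_dist ⟨x, .inl (.inl rfl)⟩ ⟨y, .inr rfl⟩
  have hk : 1 < p.length := hp ▸ hS.one_lt_dist_of_ne_of_not_adj
    (fun h => hxy (congrArg Subtype.val h)) hnxy
  set g : ℕ → V := fun i => p.getVert i
  have hinj : Set.InjOn g (Set.Iic p.length) :=
    Subtype.val_injective.comp_injOn (p.isPath_of_length_eq_dist hp).getVert_injOn
  have hmemA (i : ℕ) (hi0 : 0 < i) (hik : i < p.length) : g i ∈ A := by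
    rcases (p.getVert i).2 with (hx | hA) | hy
    · exact absurd (hinj (Set.mem_Iic.mpr hik.le) (Set.mem_Iic.mpr (Nat.zero_le _))
        (by simpa [g] using hx)) hi0.ne'
    · exact hA
    · exact absurd (hinj (Set.mem_Iic.mpr hik.le) (Set.mem_Iic.mpr le_rfl)
        (by simpa [g] using hy)) hik.ne
  have hbS : b ∉ S := by
    rintro ((h | h) | h)
    · exact G.irrefl (h ▸ hbx)
    · exact hbA h
    · exact G.irrefl (h ▸ hby)
  obtain ⟨i, hi0, hik, hadj⟩ := hG.exists_adj_interior hk (g := g) (b := b) hinj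
    (fun i hi => p.adj_getVert_succ hi)
    (fun i j hij hj => p.not_adj_getVert_of_length_eq_dist hp hij hj)
    (fun i _ h => hbS (by rw [← h]; exact (p.getVert i).2)) (by simpa [g] using hbx.symm)
    (by simpa [g] using hby.symm)
  exact hNA _ (hmemA i hi0 hik) hadj.symm

theorem IsChordal.exists_isSimplicial_not_adj [Finite V] (hG : IsChordal G)
    (hsub : ∀ C : Set V, C ≠ Set.univ → (G.induce C).CliqueOrSimplicialPair) {a b : V}
    (hab : a ≠ b) (hnadj : ¬G.Adj a b) : ∃ u, u ≠ b ∧ ¬G.Adj b u ∧ G.IsSimplicial u := by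
  obtain ⟨A, hAF, haA, hA, hclosed⟩ :=
    G.exists_induce_component (F := {w | w ≠ b ∧ ¬G.Adj b w}) ⟨hab, fun h => hnadj h.symm⟩
  have hbd : G.outerBoundary A ⊆ G.neighborSet b := by
    rintro w ⟨hwA, z, hzA, hwz⟩
    by_contra hbw
    have hwb : w ≠ b := fun h => (hAF hzA).2 (h ▸ hwz)
    exact hwA (hclosed z hzA w ⟨hwb, hbw⟩ hwz.symm)
  have hbA : b ∉ A := fun h => (hAF h).1 rfl
  have hcl : G.IsClique (G.outerBoundary A) := by
    simpa [Set.inter_eq_left.mpr hbd] using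
      hG.isClique_outerBoundary_inter_neighborSet hA hbA fun z hz => (hAF hz).2
  have hbC : b ∉ A ∪ G.outerBoundary A := fun h =>
    h.elim hbA fun hb => G.irrefl (hbd hb)
  obtain ⟨u, huA, hu⟩ := exists_isSimplicial_mem_of_isClique_outerBoundary haA hcl
    (hsub _ fun h => hbC (h ▸ Set.mem_univ b))
  exact ⟨u, (hAF huA).1, (hAF huA).2, hu⟩

theorem IsChordal.cliqueOrSimplicialPair [Finite V] (hG : IsChordal G) :
    G.CliqueOrSimplicialPair := by
  induction h : Nat.card V using Nat.strong_induction_on generalizing V with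
  | _ n ih =>
  have hsub (C : Set V) (hC : C ≠ Set.univ) : (G.induce C).CliqueOrSimplicialPair := by
    refine ih _ ?_ (hG.comap (Function.Embedding.subtype _)) rfl
    rw [← h, Nat.card_coe_set_eq, ← Set.ncard_univ]
    exact Set.ncard_lt_ncard (Set.ssubset_univ_iff.mpr hC)
  by_cases hcl : G.IsClique Set.univ
  · exact .inl hcl
  obtain ⟨a, -, b, -, hab, hnadj⟩ : ∃ a ∈ Set.univ, ∃ b ∈ Set.univ, a ≠ b ∧ ¬G.Adj a b := by
    simpa [SimpleGraph.IsClique, Set.Pairwise] using hcl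
  obtain ⟨u, hub, hbu, hu⟩ := hG.exists_isSimplicial_not_adj hsub hab hnadj
  obtain ⟨w, hwu, huw, hw⟩ := hG.exists_isSimplicial_not_adj hsub hub.symm hbu
  exact .inr ⟨u, w, hwu.symm, huw, hu, hw⟩

theorem IsChordal.exists_isSimplicial [Finite V] [Nonempty V] (hG : IsChordal G) :
    ∃ v, G.IsSimplicial v := by
  rcases hG.cliqueOrSimplicialPair with hcl | ⟨u, -, -, -, hu, -⟩
  · exact ⟨Classical.arbitrary V, hcl.subset (Set.subset_univ _)⟩
  · exact ⟨u, hu⟩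

theorem IsChordal.exists_isPosSemidefCompletion [Finite V] (hG : IsChordal G)
    {M : Matrix V V ℝ} (hM : M.IsSymm) (hcl : G.PosSemidefOnCliques M) :
    ∃ Z, G.IsPosSemidefCompletion M Z := by
  induction h : Nat.card V generalizing V with
  | zero =>
    have : IsEmpty V := (Nat.card_eq_zero.mp h).resolve_right (not_infinite_iff_finite.mpr ‹_›)
    exact ⟨M, hcl V id fun i => isEmptyElim i, fun _ => rfl, fun _ _ _ => rfl⟩
  | succ n ih =>
    have : Nonempty V := Nat.card_pos_iff.mp (by omega) |>.1
    obtain ⟨v, hv⟩ := hG.exists_isSimplicial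
    have hcard : Nat.card {w // w ≠ v} = n := by
      classical
      have := Nat.card_congr (Equiv.optionSubtypeNe v)
      rw [Finite.card_option] at this
      omega
    obtain ⟨W, hW⟩ := ih (hG.comap (Function.Embedding.subtype _)) (hM.submatrix _)
      (hcl.comap (Function.Embedding.subtype _)) hcard
    exact exists_isPosSemidefCompletion_of_isSimplicial hM hcl hv hW

end Chordal

theorem stmt3_general {V : Type} [Fintype V]
    (G : SimpleGraph V) (hG : IsChordal G)
    (Z' : Matrix V V ℝ) (hsymm : Z'.IsSymm) :
    (∃ Z : Matrix V V ℝ, Z.PosSemidef ∧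
        (∀ i, Z i i = Z' i i) ∧ (∀ i j, G.Adj i j → Z i j = Z' i j)) ↔
      (∀ s : Finset V, IsMaxClq G (↑s : Set V) →
        (Z'.submatrix (fun i : s => (i : V)) (fun j : s => (j : V))).PosSemidef) := by
  constructor
  · rintro ⟨Z, hZ⟩ s hs
    have hclique : G.IsClique (Set.range fun i : s => (i : V)) := by
      simpa using hs.1
    rw [← SimpleGraph.IsPosSemidefCompletion.submatrix_eq hZ hclique]
    exact hZ.1.submatrix _
  · intro h
    refine hG.exists_isPosSemidefCompletion hsymm fun ι f hf => ?_
    obtain ⟨t, hft, ht⟩ := SimpleGraph.exists_isMaxClq_superset hf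
    exact (h t ht).submatrix fun i => ⟨f i, hft ⟨i, rfl⟩⟩

/-- chordal PSD completion (Grone–Johnson–Sá–Wolkowicz).  The partially
specified symmetric matrix `Z'` (specified on the diagonal and on edges of the chordal
graph `G`) admits a positive semidefinite completion iff every principal submatrix indexed
by a maximal clique of `G` is positive semidefinite. -/
theorem stmt3 {V : Type} [Fintype V] [DecidableEq V]
    (G : SimpleGraph V) (hG : IsChordal G)
    (Z' : Matrix V V ℝ) (hsymm : Z'.IsSymm) :
    (∃ Z : Matrix V V ℝ, Z.PosSemidef ∧
        (∀ i, Z i i = Z' i i) ∧ (∀ i j, G.Adj i j → Z i j = Z' i j)) ↔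
      (∀ s : Finset V, IsMaxClq G (↑s : Set V) →
        (Z'.submatrix (fun i : s => (i : V)) (fun j : s => (j : V))).PosSemidef) :=
  stmt3_general G hG Z' hsymm
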